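/- Let g be a metric on an open set U ⊆ ℝ⁴, let R = (R^{αβ}) be a smooth contravariant 2-tensor field on U, let X be a smooth vector field on U, and let φ : U → ℝ be smooth. Then pointwise on U, X( (∇_αR^{αβ}∇_β)φ ) − (∇_αR^{αβ}∇_β)(Xφ) = (∇_α (L_XR)^{αβ} ∇_β)φ + R^{αβ} ∂_α(∇_γX^γ) ∂_βφ. -/

import Mathlib

noncomputable section

/-- Points of the coordinate chart `ℝ⁴`. -/
abbrev Pt : Type := Fin 4 → ℝ

/-- Coordinate partial derivative `∂_α f`. -/
def pd (α : Fin 4) (f : Pt → ℝ) (x : Pt) : ℝ :=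
  fderiv ℝ f x (Pi.single α (1 : ℝ))

/-- `|g| = |det (g_{αβ})|`. -/
def adet (g : Pt → Matrix (Fin 4) (Fin 4) ℝ) (x : Pt) : ℝ := |(g x).det|

/-- Inverse metric `g^{αβ}`. -/
def ginv (g : Pt → Matrix (Fin 4) (Fin 4) ℝ) (x : Pt) : Matrix (Fin 4) (Fin 4) ℝ := (g x)⁻¹

/-- The wave operator `□_g φ = |g|^{-1/2} ∂_α(|g|^{1/2} g^{αβ} ∂_β φ)`. -/
def boxg (g : Pt → Matrix (Fin 4) (Fin 4) ℝ) (φ : Pt → ℝ) (x : Pt) : ℝ :=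
  (Real.sqrt (adet g x))⁻¹ *
    ∑ α : Fin 4, pd α (fun y => Real.sqrt (adet g y) * ∑ β : Fin 4, ginv g y α β * pd β φ y) x

/-- `X f = X^α ∂_α f`. -/
def Xapp (X : Fin 4 → Pt → ℝ) (f : Pt → ℝ) (x : Pt) : ℝ := ∑ γ : Fin 4, X γ x * pd γ f x

/-- A smooth symmetric everywhere-nondegenerate metric on `U`. -/
structure IsMetricOn (g : Pt → Matrix (Fin 4) (Fin 4) ℝ) (U : Set Pt) : Prop where
  smooth : ∀ α β : Fin 4, ContDiffOn ℝ (⊤ : ℕ∞) (fun x => g x α β) U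
  symm : ∀ x ∈ U, ∀ α β : Fin 4, g x α β = g x β α
  det_ne : ∀ x ∈ U, (g x).det ≠ 0

/-- Deformation tensor `π_{αβ} = (L_X g)_{αβ}` of `X` (lower indices). -/
def piLow (g : Pt → Matrix (Fin 4) (Fin 4) ℝ) (X : Fin 4 → Pt → ℝ) (x : Pt) (α β : Fin 4) : ℝ :=
  (∑ γ : Fin 4, X γ x * pd γ (fun y => g y α β) x)
    + (∑ γ : Fin 4, g x γ β * pd α (X γ) x) + (∑ γ : Fin 4, g x α γ * pd β (X γ) x)

/-- Raised deformation tensor `π^{αβ}`. -/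
def piUp (g : Pt → Matrix (Fin 4) (Fin 4) ℝ) (X : Fin 4 → Pt → ℝ) (x : Pt) (α β : Fin 4) : ℝ :=
  ∑ α' : Fin 4, ∑ β' : Fin 4, ginv g x α α' * ginv g x β β' * piLow g X x α' β'

/-- Normalized deformation tensor `π̂^{αβ} = π^{αβ} - (1/2) g^{αβ} (g_{γδ} π^{γδ})`. -/
def hatPi (g : Pt → Matrix (Fin 4) (Fin 4) ℝ) (X : Fin 4 → Pt → ℝ) (x : Pt) (α β : Fin 4) : ℝ :=
  piUp g X x α β - (1/2) * ginv g x α β * (∑ γ : Fin 4, ∑ δ : Fin 4, g x γ δ * piUp g X x γ δ)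

/-- Second-order operator `(∇_α R^{αβ} ∇_β)φ = |g|^{-1/2}∂_α(|g|^{1/2} R^{αβ} ∂_βφ)`. -/
def divForm (g : Pt → Matrix (Fin 4) (Fin 4) ℝ) (R : Pt → Fin 4 → Fin 4 → ℝ)
    (φ : Pt → ℝ) (x : Pt) : ℝ :=
  (Real.sqrt (adet g x))⁻¹ *
    ∑ α : Fin 4, pd α (fun y => Real.sqrt (adet g y) * ∑ β : Fin 4, R y α β * pd β φ y) x

/-- Lie derivative of a contravariant 2-tensor:
`(L_X R)^{αβ} = X^γ∂_γR^{αβ} - R^{γβ}∂_γX^α - R^{αγ}∂_γX^β`. -/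
def lieT (X : Fin 4 → Pt → ℝ) (R : Pt → Fin 4 → Fin 4 → ℝ) (x : Pt) (α β : Fin 4) : ℝ :=
  (∑ γ : Fin 4, X γ x * pd γ (fun y => R y α β) x)
    - (∑ γ : Fin 4, R x γ β * pd γ (X α) x)
    - (∑ γ : Fin 4, R x α γ * pd γ (X β) x)

/-- Covariant divergence `∇_αX^α = |g|^{-1/2}∂_α(|g|^{1/2}X^α)`. -/
def covDiv (g : Pt → Matrix (Fin 4) (Fin 4) ℝ) (X : Fin 4 → Pt → ℝ) (x : Pt) : ℝ :=
  (Real.sqrt (adet g x))⁻¹ * ∑ γ : Fin 4, pd γ (fun y => Real.sqrt (adet g y) * X γ y) x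

/-!
Put `ℓ = log √|g|`, so that `√|g| = e^ℓ`. Then `∇_α Y^α = div_ℓ Y := ∂_α Y^α + Y(ℓ)` and
`(∇_α R^{αβ} ∇_β)φ = div_ℓ V` with `V^α = R^{αβ} ∂_β φ`. Symmetry of second derivatives gives two
coordinate identities: `div_ℓ [X, Y] = X(div_ℓ Y) - Y(div_ℓ X)`, and
`[X, V] = (L_X R)^{αβ} ∂_β φ + R^{αβ} ∂_β (Xφ)`. Taking `div_ℓ` of the second and inserting the
first yields `X(div_ℓ V) - div_ℓ (R ∂(Xφ)) = div_ℓ ((L_X R) ∂φ) + V(div_ℓ X)`.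
-/

open scoped ContDiff

section PartialDerivatives

variable {U : Set Pt} {f h : Pt → ℝ} {x : Pt}

lemma ContDiffOn.differentiableAt_of_isOpen (hf : ContDiffOn ℝ ∞ f U) (hU : IsOpen U)
    (hx : x ∈ U) : DifferentiableAt ℝ f x :=
  (hf.differentiableOn (by simp)).differentiableAt (hU.mem_nhds hx)

lemma ContDiffOn.pd (hf : ContDiffOn ℝ ∞ f U) (hU : IsOpen U) (α : Fin 4) :
    ContDiffOn ℝ ∞ (pd α f) U :=
  (hf.fderiv_of_isOpen hU le_rfl).clm_apply contDiffOn_const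

lemma pd_congr_of_eqOn (hU : IsOpen U) (hfh : Set.EqOn f h U) (hx : x ∈ U) (α : Fin 4) :
    pd α f x = pd α h x := by
  rw [pd, pd, Filter.EventuallyEq.fderiv_eq (Filter.eventually_of_mem (hU.mem_nhds hx) hfh)]

lemma pd_add (hf : DifferentiableAt ℝ f x) (hh : DifferentiableAt ℝ h x) (α : Fin 4) :
    pd α (fun y => f y + h y) x = pd α f x + pd α h x := by
  simp [pd, fderiv_fun_add hf hh]

lemma pd_sub (hf : DifferentiableAt ℝ f x) (hh : DifferentiableAt ℝ h x) (α : Fin 4) :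
    pd α (fun y => f y - h y) x = pd α f x - pd α h x := by
  simp [pd, fderiv_fun_sub hf hh]

lemma pd_mul (hf : DifferentiableAt ℝ f x) (hh : DifferentiableAt ℝ h x) (α : Fin 4) :
    pd α (fun y => f y * h y) x = pd α f x * h x + f x * pd α h x := by
  simp [pd, fderiv_fun_mul hf hh]
  ring

lemma pd_sum {ι : Type*} {s : Finset ι} {F : ι → Pt → ℝ}
    (hF : ∀ i ∈ s, DifferentiableAt ℝ (F i) x) (α : Fin 4) :
    pd α (fun y => ∑ i ∈ s, F i y) x = ∑ i ∈ s, pd α (F i) x := by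
  simp [pd, fderiv_fun_sum hF]

lemma pd_exp (hf : DifferentiableAt ℝ f x) (α : Fin 4) :
    pd α (fun y => Real.exp (f y)) x = Real.exp (f x) * pd α f x := by
  simp [pd, hf.hasFDerivAt.exp.fderiv]

lemma pd_comm (hf : ContDiffOn ℝ ∞ f U) (hU : IsOpen U) (hx : x ∈ U) (α β : Fin 4) :
    pd α (pd β f) x = pd β (pd α f) x := by
  have hf' : ContDiffAt ℝ ∞ f x := hf.contDiffAt (hU.mem_nhds hx)
  have hd : DifferentiableAt ℝ (fderiv ℝ f) x :=
    ((hf.fderiv_of_isOpen hU (m := ∞) le_rfl).contDiffAt (hU.mem_nhds hx)).differentiableAt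
      (by simp)
  have hpd : ∀ γ δ : Fin 4,
      pd γ (pd δ f) x = fderiv ℝ (fderiv ℝ f) x (Pi.single γ 1) (Pi.single δ 1) := by
    intro γ δ
    change fderiv ℝ (fun y => fderiv ℝ f y (Pi.single δ 1)) x (Pi.single γ 1) = _
    simp [fderiv_clm_apply hd (differentiableAt_const _)]
  rw [hpd, hpd, (hf'.isSymmSndFDerivAt (by simpa using ENat.LEInfty.out)).eq]

end PartialDerivatives

theorem ContDiffOn.matrix_det {𝕜 E ι : Type*} [NontriviallyNormedField 𝕜]
    [NormedAddCommGroup E] [NormedSpace 𝕜 E] [Fintype ι] [DecidableEq ι]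
    {A : E → Matrix ι ι 𝕜} {s : Set E} {n : WithTop ℕ∞}
    (hA : ∀ i j, ContDiffOn 𝕜 n (fun x => A x i j) s) :
    ContDiffOn 𝕜 n (fun x => (A x).det) s := by
  simp_rw [Matrix.det_apply]
  exact ContDiffOn.sum fun σ _ => (contDiffOn_prod fun i _ => hA _ _).const_smul _

section VectorFields

variable {U : Set Pt} {X Y : Fin 4 → Pt → ℝ} {R : Pt → Fin 4 → Fin 4 → ℝ} {f h ℓ φ : Pt → ℝ}
  {x : Pt}

def lieBracket (X Y : Fin 4 → Pt → ℝ) (α : Fin 4) (x : Pt) : ℝ :=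
  Xapp X (Y α) x - Xapp Y (X α) x

def flatDiv (Y : Fin 4 → Pt → ℝ) (x : Pt) : ℝ := ∑ α : Fin 4, pd α (Y α) x

def weightedDiv (ℓ : Pt → ℝ) (Y : Fin 4 → Pt → ℝ) (x : Pt) : ℝ := flatDiv Y x + Xapp Y ℓ x

def contractGrad (R : Pt → Fin 4 → Fin 4 → ℝ) (φ : Pt → ℝ) (α : Fin 4) (x : Pt) : ℝ :=
  ∑ β : Fin 4, R x α β * pd β φ x

lemma ContDiffOn.Xapp (hf : ContDiffOn ℝ ∞ f U) (hX : ∀ α, ContDiffOn ℝ ∞ (X α) U)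
    (hU : IsOpen U) : ContDiffOn ℝ ∞ (Xapp X f) U :=
  ContDiffOn.sum fun γ _ => (hX γ).mul (hf.pd hU γ)

lemma contDiffOn_flatDiv (hY : ∀ α, ContDiffOn ℝ ∞ (Y α) U) (hU : IsOpen U) :
    ContDiffOn ℝ ∞ (flatDiv Y) U :=
  ContDiffOn.sum fun α _ => (hY α).pd hU α

lemma contDiffOn_contractGrad (hR : ∀ α β, ContDiffOn ℝ ∞ (fun x => R x α β) U)
    (hφ : ContDiffOn ℝ ∞ φ U) (hU : IsOpen U) (α : Fin 4) :
    ContDiffOn ℝ ∞ (contractGrad R φ α) U :=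
  ContDiffOn.sum fun β _ => (hR α β).mul (hφ.pd hU β)

lemma contDiffOn_lieT (hX : ∀ α, ContDiffOn ℝ ∞ (X α) U)
    (hR : ∀ α β, ContDiffOn ℝ ∞ (fun x => R x α β) U) (hU : IsOpen U) (α β : Fin 4) :
    ContDiffOn ℝ ∞ (fun x => lieT X R x α β) U :=
  (((hR α β).Xapp hX hU).sub (ContDiffOn.sum fun γ _ => (hR γ β).mul ((hX α).pd hU γ))).sub
    (ContDiffOn.sum fun γ _ => (hR α γ).mul ((hX β).pd hU γ))

lemma pd_sum_mul {F G : Fin 4 → Pt → ℝ} (hF : ∀ i, DifferentiableAt ℝ (F i) x)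
    (hG : ∀ i, DifferentiableAt ℝ (G i) x) (γ : Fin 4) :
    pd γ (fun y => ∑ i : Fin 4, F i y * G i y) x
      = ∑ i : Fin 4, (pd γ (F i) x * G i x + F i x * pd γ (G i) x) := by
  rw [pd_sum (F := fun i y => F i y * G i y) fun i _ => (hF i).fun_mul (hG i)]
  exact Finset.sum_congr rfl fun i _ => pd_mul (hF i) (hG i) γ

lemma pd_Xapp (hX : ∀ α, ContDiffOn ℝ ∞ (X α) U) (hf : ContDiffOn ℝ ∞ f U) (hU : IsOpen U)
    (hx : x ∈ U) (γ : Fin 4) :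
    pd γ (Xapp X f) x = ∑ δ : Fin 4, (pd γ (X δ) x * pd δ f x + X δ x * pd γ (pd δ f) x) :=
  pd_sum_mul (fun δ => (hX δ).differentiableAt_of_isOpen hU hx)
    (fun δ => (hf.pd hU δ).differentiableAt_of_isOpen hU hx) γ

lemma pd_contractGrad (hR : ∀ α β, ContDiffOn ℝ ∞ (fun x => R x α β) U)
    (hφ : ContDiffOn ℝ ∞ φ U) (hU : IsOpen U) (hx : x ∈ U) (α γ : Fin 4) :
    pd γ (contractGrad R φ α) x
      = ∑ β : Fin 4, (pd γ (fun y => R y α β) x * pd β φ x + R x α β * pd γ (pd β φ) x) :=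
  pd_sum_mul (fun β => (hR α β).differentiableAt_of_isOpen hU hx)
    (fun β => (hφ.pd hU β).differentiableAt_of_isOpen hU hx) γ

lemma pd_lieBracket (hX : ∀ α, ContDiffOn ℝ ∞ (X α) U) (hY : ∀ α, ContDiffOn ℝ ∞ (Y α) U)
    (hU : IsOpen U) (hx : x ∈ U) (α γ : Fin 4) :
    pd γ (lieBracket X Y α) x = pd γ (Xapp X (Y α)) x - pd γ (Xapp Y (X α)) x :=
  pd_sub (((hY α).Xapp hX hU).differentiableAt_of_isOpen hU hx)
    (((hX α).Xapp hY hU).differentiableAt_of_isOpen hU hx) γ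

lemma pd_flatDiv (hY : ∀ α, ContDiffOn ℝ ∞ (Y α) U) (hU : IsOpen U) (hx : x ∈ U) (γ : Fin 4) :
    pd γ (flatDiv Y) x = ∑ α : Fin 4, pd γ (pd α (Y α)) x :=
  pd_sum (fun α _ => ((hY α).pd hU α).differentiableAt_of_isOpen hU hx) γ

lemma Xapp_congr_of_eqOn (hU : IsOpen U) (hfh : Set.EqOn f h U) (hx : x ∈ U) :
    Xapp X f x = Xapp X h x := by
  simp only [Xapp, pd_congr_of_eqOn hU hfh hx]

lemma Xapp_add (hf : DifferentiableAt ℝ f x) (hh : DifferentiableAt ℝ h x) :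
    Xapp X (fun y => f y + h y) x = Xapp X f x + Xapp X h x := by
  simp only [Xapp, pd_add hf hh, mul_add, Finset.sum_add_distrib]

lemma Xapp_Xapp_sub_Xapp_Xapp (hX : ∀ α, ContDiffOn ℝ ∞ (X α) U)
    (hY : ∀ α, ContDiffOn ℝ ∞ (Y α) U) (hf : ContDiffOn ℝ ∞ f U) (hU : IsOpen U) (hx : x ∈ U) :
    Xapp X (Xapp Y f) x - Xapp Y (Xapp X f) x = Xapp (lieBracket X Y) f x := by
  have hf₂ : ∀ α β, pd α (pd β f) x = pd β (pd α f) x := pd_comm hf hU hx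
  simp only [Xapp, pd_Xapp hX hf hU hx, pd_Xapp hY hf hU hx, lieBracket, Fin.sum_univ_four, hf₂]
  ring

lemma flatDiv_lieBracket (hX : ∀ α, ContDiffOn ℝ ∞ (X α) U) (hY : ∀ α, ContDiffOn ℝ ∞ (Y α) U)
    (hU : IsOpen U) (hx : x ∈ U) :
    flatDiv (lieBracket X Y) x = Xapp X (flatDiv Y) x - Xapp Y (flatDiv X) x := by
  have hX₂ : ∀ α β γ, pd α (pd β (X γ)) x = pd β (pd α (X γ)) x :=
    fun α β γ => pd_comm (hX γ) hU hx α β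
  have hY₂ : ∀ α β γ, pd α (pd β (Y γ)) x = pd β (pd α (Y γ)) x :=
    fun α β γ => pd_comm (hY γ) hU hx α β
  simp only [flatDiv, Xapp, pd_lieBracket hX hY hU hx, pd_Xapp hX (hY _) hU hx,
    pd_Xapp hY (hX _) hU hx, pd_flatDiv hX hU hx, pd_flatDiv hY hU hx, Fin.sum_univ_four, hX₂, hY₂]
  ring

lemma weightedDiv_lieBracket (hX : ∀ α, ContDiffOn ℝ ∞ (X α) U)
    (hY : ∀ α, ContDiffOn ℝ ∞ (Y α) U) (hℓ : ContDiffOn ℝ ∞ ℓ U) (hU : IsOpen U) (hx : x ∈ U) :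
    weightedDiv ℓ (lieBracket X Y) x = Xapp X (weightedDiv ℓ Y) x - Xapp Y (weightedDiv ℓ X) x := by
  have hd : ∀ {Z : Fin 4 → Pt → ℝ}, (∀ α, ContDiffOn ℝ ∞ (Z α) U) →
      DifferentiableAt ℝ (flatDiv Z) x ∧ DifferentiableAt ℝ (Xapp Z ℓ) x := fun hZ =>
    ⟨(contDiffOn_flatDiv hZ hU).differentiableAt_of_isOpen hU hx,
      (hℓ.Xapp hZ hU).differentiableAt_of_isOpen hU hx⟩
  unfold weightedDiv
  rw [flatDiv_lieBracket hX hY hU hx, ← Xapp_Xapp_sub_Xapp_Xapp hX hY hℓ hU hx,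
    Xapp_add (hd hY).1 (hd hY).2, Xapp_add (hd hX).1 (hd hX).2]
  ring

lemma lieBracket_contractGrad (hX : ∀ α, ContDiffOn ℝ ∞ (X α) U)
    (hR : ∀ α β, ContDiffOn ℝ ∞ (fun x => R x α β) U) (hφ : ContDiffOn ℝ ∞ φ U)
    (hU : IsOpen U) (hx : x ∈ U) (α : Fin 4) :
    lieBracket X (contractGrad R φ) α x
      = contractGrad (lieT X R) φ α x + contractGrad R (Xapp X φ) α x := by
  have hφ₂ : ∀ β γ, pd β (pd γ φ) x = pd γ (pd β φ) x := pd_comm hφ hU hx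
  simp only [lieBracket, Xapp, contractGrad, lieT, pd_contractGrad hR hφ hU hx,
    pd_Xapp hX hφ hU hx, Fin.sum_univ_four, hφ₂]
  ring

lemma weightedDiv_add_of_eqOn {Z Y' : Fin 4 → Pt → ℝ}
    (hZ : ∀ α, Set.EqOn (Z α) (fun y => Y α y + Y' α y) U) (hY : ∀ α, DifferentiableAt ℝ (Y α) x)
    (hY' : ∀ α, DifferentiableAt ℝ (Y' α) x) (hU : IsOpen U) (hx : x ∈ U) :
    weightedDiv ℓ Z x = weightedDiv ℓ Y x + weightedDiv ℓ Y' x := by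
  simp only [weightedDiv, flatDiv, Xapp, pd_congr_of_eqOn hU (hZ _) hx, pd_add (hY _) (hY' _),
    hZ _ hx]
  simp only [add_mul, Finset.sum_add_distrib]
  ring

lemma inv_mul_sum_pd_mul_eq_weightedDiv {w : Pt → ℝ} (hw : Set.EqOn w (fun y => Real.exp (ℓ y)) U)
    (hℓ : ContDiffOn ℝ ∞ ℓ U) (hY : ∀ α, ContDiffOn ℝ ∞ (Y α) U) (hU : IsOpen U) (hx : x ∈ U) :
    (w x)⁻¹ * ∑ α : Fin 4, pd α (fun y => w y * Y α y) x = weightedDiv ℓ Y x := by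
  have hℓx := hℓ.differentiableAt_of_isOpen hU hx
  have hwY : ∀ α, Set.EqOn (fun y => w y * Y α y) (fun y => Real.exp (ℓ y) * Y α y) U :=
    fun α y hy => congrArg (· * Y α y) (hw hy)
  simp only [pd_congr_of_eqOn hU (hwY _) hx,
    pd_mul hℓx.exp ((hY _).differentiableAt_of_isOpen hU hx), pd_exp hℓx, hw hx,
    weightedDiv, flatDiv, Xapp, Finset.mul_sum, ← Finset.sum_add_distrib]
  refine Finset.sum_congr rfl fun α _ => ?_
  field_simp
  ring

end VectorFields

def logVolumeDensity (g : Pt → Matrix (Fin 4) (Fin 4) ℝ) (x : Pt) : ℝ :=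
  Real.log (Real.sqrt (adet g x))

section Metric

variable {U : Set Pt} {g : Pt → Matrix (Fin 4) (Fin 4) ℝ}

lemma contDiffOn_logVolumeDensity (hg : IsMetricOn g U) :
    ContDiffOn ℝ ∞ (logVolumeDensity g) U := by
  have h : logVolumeDensity g = fun y => Real.log (g y).det / 2 := funext fun y => by
    rw [logVolumeDensity, adet, Real.log_sqrt (abs_nonneg _), Real.log_abs]
  rw [h]
  exact ((ContDiffOn.matrix_det hg.smooth).log hg.det_ne).div_const 2

lemma sqrt_adet_eqOn_exp_logVolumeDensity (hg : IsMetricOn g U) :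
    Set.EqOn (fun y => Real.sqrt (adet g y)) (fun y => Real.exp (logVolumeDensity g y)) U :=
  fun y hy => (Real.exp_log (Real.sqrt_pos.2 (abs_pos.2 (hg.det_ne y hy)))).symm

lemma divForm_eqOn_weightedDiv (hg : IsMetricOn g U) (hU : IsOpen U)
    {R : Pt → Fin 4 → Fin 4 → ℝ} (hR : ∀ α β, ContDiffOn ℝ ∞ (fun x => R x α β) U)
    {φ : Pt → ℝ} (hφ : ContDiffOn ℝ ∞ φ U) :
    Set.EqOn (divForm g R φ) (weightedDiv (logVolumeDensity g) (contractGrad R φ)) U :=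
  fun _ hx => inv_mul_sum_pd_mul_eq_weightedDiv (sqrt_adet_eqOn_exp_logVolumeDensity hg)
    (contDiffOn_logVolumeDensity hg) (contDiffOn_contractGrad hR hφ hU) hU hx

lemma covDiv_eqOn_weightedDiv (hg : IsMetricOn g U) (hU : IsOpen U)
    {X : Fin 4 → Pt → ℝ} (hX : ∀ α, ContDiffOn ℝ ∞ (X α) U) :
    Set.EqOn (covDiv g X) (weightedDiv (logVolumeDensity g) X) U :=
  fun _ hx => inv_mul_sum_pd_mul_eq_weightedDiv (sqrt_adet_eqOn_exp_logVolumeDensity hg)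
    (contDiffOn_logVolumeDensity hg) hX hU hx

end Metric

/-- the commutator identity
`[X, ∇_αR^{αβ}∇_β]φ = (∇_α(L_XR)^{αβ}∇_β)φ + R^{αβ}∂_α(∇_γX^γ)∂_βφ`. -/
theorem second_order_operator_commutator
    (U : Set Pt) (hU : IsOpen U)
    (g : Pt → Matrix (Fin 4) (Fin 4) ℝ) (hg : IsMetricOn g U)
    (R : Pt → Fin 4 → Fin 4 → ℝ) (hR : ∀ α β, ContDiffOn ℝ (⊤ : ℕ∞) (fun x => R x α β) U)
    (X : Fin 4 → Pt → ℝ) (hX : ∀ α, ContDiffOn ℝ (⊤ : ℕ∞) (X α) U)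
    (φ : Pt → ℝ) (hφ : ContDiffOn ℝ (⊤ : ℕ∞) φ U) :
    ∀ x ∈ U,
      Xapp X (divForm g R φ) x - divForm g R (Xapp X φ) x
        = divForm g (lieT X R) φ x
          + ∑ α : Fin 4, ∑ β : Fin 4, R x α β * pd α (covDiv g X) x * pd β φ x := by
  intro x hx
  have hℓ := contDiffOn_logVolumeDensity hg
  have hV := contDiffOn_contractGrad hR hφ hU
  have hLR := contDiffOn_lieT hX hR hU
  have hXφ := hφ.Xapp hX hU
  have hsplit := weightedDiv_add_of_eqOn (ℓ := logVolumeDensity g)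
    (fun α _ hy => lieBracket_contractGrad hX hR hφ hU hy α)
    (fun α => (contDiffOn_contractGrad hLR hφ hU α).differentiableAt_of_isOpen hU hx)
    (fun α => (contDiffOn_contractGrad hR hXφ hU α).differentiableAt_of_isOpen hU hx) hU hx
  rw [weightedDiv_lieBracket hX hV hℓ hU hx] at hsplit
  rw [Xapp_congr_of_eqOn hU (divForm_eqOn_weightedDiv hg hU hR hφ) hx,
    divForm_eqOn_weightedDiv hg hU hR hXφ hx, divForm_eqOn_weightedDiv hg hU hLR hφ hx]
  have hlast : Xapp (contractGrad R φ) (weightedDiv (logVolumeDensity g) X) x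
      = ∑ α : Fin 4, ∑ β : Fin 4, R x α β * pd α (covDiv g X) x * pd β φ x := by
    simp only [Xapp, contractGrad, pd_congr_of_eqOn hU (covDiv_eqOn_weightedDiv hg hU hX) hx,
      Finset.sum_mul]
    exact Finset.sum_congr rfl fun α _ => Finset.sum_congr rfl fun β _ => by ring
  linarith
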